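/- arXiv:1105.1274 — 5 statements merged into one kernel-verified Lean document; each statement's English description precedes it below -/
import Mathlib

section
/- Let T be a natural number, let X₀,…,X_T be i.i.d. random variables uniformly distributed on [0,1], and let Y be uniformly distributed on [0,1] and independent of the X's. Then the probability of the event {X_t < Y for all t < T and X_T ≥ Y} equals 1 / ((T+1)(T+2)). In particular, for uniform state and threshold distributions the quenched-threshold (η = 1) quiescent-time distribution P(T) = 1/((T+1)(T+2)) has a power-law tail with exponent −2. -/
/-!
Conditionally on the threshold `Y = y`, the state variables are still independent, so the
laminar phase ends exactly at step `T` with probability `P(X < y)^T P(X ≥ y) = y^T (1 - y)`;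
integrating over `y ∈ [0,1]` gives `1/(T+1) - 1/(T+2)`.
-/

open MeasureTheory ProbabilityTheory

lemma MeasureTheory.Measure.pi_sum_unit_setOf_forall_mem {ι α : Type*} [Fintype ι]
    [MeasurableSpace α] (μ : ι ⊕ Unit → Measure α) [∀ i, SigmaFinite (μ i)]
    (s : ι → α → Set α)
    (hs : MeasurableSet {x : ι ⊕ Unit → α | ∀ i, x (.inl i) ∈ s i (x (.inr ()))}) :
    Measure.pi μ {x : ι ⊕ Unit → α | ∀ i, x (.inl i) ∈ s i (x (.inr ()))}
      = ∫⁻ y, ∏ i, μ (.inl i) (s i y) ∂μ (.inr ()) := by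
  let e := MeasurableEquiv.sumPiEquivProdPi (fun _ : ι ⊕ Unit => α)
  let S : Set ((ι → α) × (Unit → α)) := {p | ∀ i, p.1 i ∈ s i (p.2 ())}
  have hS : MeasurableSet S := e.symm.measurable hs
  have hslice (y : Unit → α) : (fun x => (x, y)) ⁻¹' S = Set.univ.pi fun i => s i (y ()) := by
    ext; simp [S]
  change Measure.pi μ (e ⁻¹' S) = _
  rw [(measurePreserving_sumPiEquivProdPi μ).measure_preimage_equiv, Measure.prod_apply_symm hS]
  simp_rw [hslice, Measure.pi_pi]
  exact ((measurePreserving_piUnique fun _ : Unit => μ (.inr ())).lintegral_map_equiv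
    fun y => ∏ i, μ (.inl i) (s i y)).symm

/-- Coordinate `inl t` is the state variable `X_t`, coordinate `inr ()` the threshold `Y`. -/
def firstExceedanceAt (T : ℕ) : Set (Fin (T + 1) ⊕ Unit → ℝ) :=
  {x | (∀ t : Fin (T + 1), (t : ℕ) < T → x (.inl t) < x (.inr ())) ∧
    x (.inr ()) ≤ x (.inl (Fin.last T))}

lemma firstExceedanceAt_eq_setOf_forall_mem (T : ℕ) :
    firstExceedanceAt T =
      {x | ∀ t : Fin (T + 1),
        x (.inl t) ∈ (if (t : ℕ) < T then Set.Iio else Set.Ici) (x (.inr ()))} := by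
  ext x
  simp only [firstExceedanceAt, Set.mem_ofPred_eq, Fin.forall_fin_succ', Fin.val_castSucc,
    Fin.is_lt, if_true, Fin.val_last, lt_irrefl, if_false, Set.mem_Iio, Set.mem_Ici, true_imp_iff,
    false_imp_iff, and_true]

lemma measurableSet_firstExceedanceAt (T : ℕ) : MeasurableSet (firstExceedanceAt T) := by
  unfold firstExceedanceAt
  measurability

lemma pi_firstExceedanceAt (F G : Measure ℝ) [SigmaFinite F] [SigmaFinite G] (T : ℕ) :
    Measure.pi (Sum.elim (fun _ => F) (fun _ => G)) (firstExceedanceAt T)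
      = ∫⁻ y, F (Set.Iio y) ^ T * F (Set.Ici y) ∂G := by
  have (i : Fin (T + 1) ⊕ Unit) : SigmaFinite (Sum.elim (fun _ => F) (fun _ => G) i) := by
    cases i <;> assumption
  have hmeas := measurableSet_firstExceedanceAt T
  rw [firstExceedanceAt_eq_setOf_forall_mem] at hmeas ⊢
  rw [Measure.pi_sum_unit_setOf_forall_mem _ _ hmeas]
  simp [Fin.prod_univ_castSucc]

lemma integral_pow_mul_one_sub (n : ℕ) :
    ∫ y in (0 : ℝ)..1, y ^ n * (1 - y) = 1 / ((n + 1) * (n + 2)) := by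
  simp_rw [mul_one_sub, ← pow_succ]
  rw [intervalIntegral.integral_sub (intervalIntegral.intervalIntegrable_pow n)
    (intervalIntegral.intervalIntegrable_pow (n + 1)), integral_pow, integral_pow]
  push_cast
  field_simp
  ring

lemma volume_restrict_Icc_Iio {y : ℝ} (hy : y ∈ Set.Icc (0 : ℝ) 1) :
    volume.restrict (Set.Icc (0 : ℝ) 1) (Set.Iio y) = ENNReal.ofReal y := by
  have : Set.Iio y ∩ Set.Icc 0 1 = Set.Ico 0 y := by
    ext x; simp only [Set.mem_inter_iff, Set.mem_Iio, Set.mem_Icc, Set.mem_Ico]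
    grind
  rw [Measure.restrict_apply measurableSet_Iio, this, Real.volume_Ico, sub_zero]

lemma volume_restrict_Icc_Ici {y : ℝ} (hy : y ∈ Set.Icc (0 : ℝ) 1) :
    volume.restrict (Set.Icc (0 : ℝ) 1) (Set.Ici y) = ENNReal.ofReal (1 - y) := by
  have : Set.Ici y ∩ Set.Icc 0 1 = Set.Icc y 1 := by
    ext x; simp only [Set.mem_inter_iff, Set.mem_Ici, Set.mem_Icc]
    grind
  rw [Measure.restrict_apply measurableSet_Ici, this, Real.volume_Icc]

lemma lintegral_uniform_Iio_pow_mul_Ici (n : ℕ) :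
    ∫⁻ y, volume.restrict (Set.Icc (0 : ℝ) 1) (Set.Iio y) ^ n *
        volume.restrict (Set.Icc (0 : ℝ) 1) (Set.Ici y) ∂volume.restrict (Set.Icc (0 : ℝ) 1)
      = ENNReal.ofReal (1 / ((n + 1) * (n + 2))) := by
  have hdensity : Set.EqOn (fun y => volume.restrict (Set.Icc (0 : ℝ) 1) (Set.Iio y) ^ n *
        volume.restrict (Set.Icc (0 : ℝ) 1) (Set.Ici y))
      (fun y => ENNReal.ofReal (y ^ n * (1 - y))) (Set.Icc 0 1) := fun y hy => by
    dsimp only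
    rw [volume_restrict_Icc_Iio hy, volume_restrict_Icc_Ici hy, ← ENNReal.ofReal_pow hy.1,
      ← ENNReal.ofReal_mul (pow_nonneg hy.1 n)]
  have hnonneg : 0 ≤ᵐ[volume.restrict (Set.Icc (0 : ℝ) 1)] fun y : ℝ => y ^ n * (1 - y) :=
    ae_restrict_of_forall_mem measurableSet_Icc fun y hy =>
      mul_nonneg (pow_nonneg hy.1 n) (sub_nonneg.2 hy.2)
  rw [setLIntegral_congr_fun measurableSet_Icc hdensity, ← ofReal_integral_eq_lintegral_ofReal
    (by fun_prop : Continuous fun y : ℝ => y ^ n * (1 - y)).integrableOn_Icc hnonneg,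
    integral_Icc_eq_integral_Ioc, ← intervalIntegral.integral_of_le zero_le_one,
    integral_pow_mul_one_sub]

theorem stmt_4_general {Ω : Type*} [MeasurableSpace Ω] (P : Measure Ω)
    (T : ℕ) (X : Fin (T + 1) → Ω → ℝ) (Y : Ω → ℝ)
    (hX : ∀ t, Measurable (X t)) (hY : Measurable Y)
    (hXlaw : ∀ t, P.map (X t) = volume.restrict (Set.Icc (0:ℝ) 1))
    (hYlaw : P.map Y = volume.restrict (Set.Icc (0:ℝ) 1))
    (hindep : iIndepFun (Sum.elim X (fun _ : Unit => Y)) P) :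
    (P {ω | (∀ t : Fin (T + 1), (t : ℕ) < T → X t ω < Y ω) ∧
        Y ω ≤ X (Fin.last T) ω}).toReal
      = 1 / ((T + 1) * (T + 2)) := by
  let Z := Sum.elim X (fun _ : Unit => Y)
  have hZ (i : Fin (T + 1) ⊕ Unit) : Measurable (Z i) := by
    cases i
    exacts [hX _, hY]
  have hlaw : (fun i => P.map (Z i)) =
      Sum.elim (fun _ => volume.restrict (Set.Icc (0:ℝ) 1))
        (fun _ => volume.restrict (Set.Icc (0:ℝ) 1)) := by
    funext i
    cases i
    exacts [hXlaw _, hYlaw]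
  change (P ((fun ω i => Z i ω) ⁻¹' firstExceedanceAt T)).toReal = _
  rw [← Measure.map_apply (measurable_pi_lambda _ hZ) (measurableSet_firstExceedanceAt T),
    hindep.map_fun_eq_pi_map fun i => (hZ i).aemeasurable, hlaw, pi_firstExceedanceAt, lintegral_uniform_Iio_pow_mul_Ici,
    ENNReal.toReal_ofReal (by positivity)]

/-- Threshold-of-instability model with uniform densities at η = 1: if `X₀,…,X_T` are
i.i.d. uniform on `[0,1]` and `Y` is uniform on `[0,1]`, all mutually independent, then
the probability that `X_t < Y` for all `t < T` and `X_T ≥ Y` equals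
`1/((T+1)(T+2))` — a power-law tail with exponent `-2`. -/
theorem stmt_4 {Ω : Type*} [MeasurableSpace Ω] (P : Measure Ω) [IsProbabilityMeasure P]
    (T : ℕ) (X : Fin (T + 1) → Ω → ℝ) (Y : Ω → ℝ)
    (hX : ∀ t, Measurable (X t)) (hY : Measurable Y)
    (hXlaw : ∀ t, P.map (X t) = volume.restrict (Set.Icc (0:ℝ) 1))
    (hYlaw : P.map Y = volume.restrict (Set.Icc (0:ℝ) 1))
    (hindep : iIndepFun (Sum.elim X (fun _ : Unit => Y)) P) :
    (P {ω | (∀ t : Fin (T + 1), (t : ℕ) < T → X t ω < Y ω) ∧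
        Y ω ≤ X (Fin.last T) ω}).toReal
      = 1 / ((T + 1) * (T + 2)) :=
  stmt_4_general P T X Y hX hY hXlaw hYlaw hindep
end

section
/- Let α > −1, β > −1 and define P(T) = Γ(2+β)·Γ(1+T(1+α)) / Γ(2+β+T(1+α)) − Γ(2+β)·Γ(1+(T+1)(1+α)) / Γ(2+β+(T+1)(1+α)) for natural numbers T ≥ 1. Then T^{2+β} · P(T) converges, as T → ∞, to (1+β)·Γ(2+β)·(1+α)^{−1−β}; equivalently P(T) is asymptotically equivalent to (1+β)Γ(2+β)(1+α)^{−1−β} / T^{2+β}. In particular the decay exponent −(2+β) depends only on the threshold distribution exponent β and is independent of the state-distribution exponent α. -/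
open Real Filter Topology

/-! Put `c = 1 + α` and `M y = Γ(2+β) Γ(1+y) / Γ(2+β+y)`, so that `P T = M (T c) - M (T c + c)`.
By the Beta integral, `M y = (1+β) ∫₀¹ t^y (1-t)^β dt`, hence
`P T = (1+β) ∫₀¹ t^(T c) (1-t)^β (1 - t^c) dt`. Bernoulli's inequality traps `1 - t^c` between
`c (1-t)` and `c t^(c-1) (1-t)` (in an order depending on whether `c ≤ 1`), and both bounds
integrate back to Gamma ratios `c (1+β) Γ(2+β) Γ(T c + κ) / Γ(T c + κ + 2 + β)` with `κ = 1` and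
`κ = c`. By Gautschi's inequality (log-convexity of `Γ`) both are
`~ (1+β) Γ(2+β) c^(-1-β) T^(-2-β)`, and the squeeze gives the limit. -/

namespace Real

theorem Gamma_add_le_Gamma_mul_rpow {x s : ℝ} (hx : 0 < x) (hs0 : 0 ≤ s) (hs1 : s ≤ 1) :
    Gamma (x + s) ≤ Gamma x * x ^ s := by
  have hΓ : 0 < Gamma x := Gamma_pos_of_pos hx
  have hconv := convexOn_log_Gamma.2 (Set.mem_Ioi.2 hx)
    (Set.mem_Ioi.2 (by linarith : 0 < x + 1)) (sub_nonneg.2 hs1) hs0 (by ring)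
  simp only [smul_eq_mul, Function.comp_apply, Gamma_add_one hx.ne',
    log_mul hx.ne' hΓ.ne', show (1 - s) * x + s * (x + 1) = x + s by ring] at hconv
  rw [← log_le_log_iff (Gamma_pos_of_pos (by linarith)) (by positivity),
    log_mul hΓ.ne' (rpow_pos_of_pos hx s).ne', log_rpow hx]
  linarith

theorem tendsto_rpow_mul_Gamma_div_Gamma_add_of_le_one {s : ℝ} (hs0 : 0 ≤ s) (hs1 : s ≤ 1) :
    Tendsto (fun x ↦ x ^ s * Gamma x / Gamma (x + s)) atTop (𝓝 1) := by
  have hupper : Tendsto (fun x : ℝ ↦ ((x + s) / x) ^ (1 - s)) atTop (𝓝 1) := by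
    have h : Tendsto (fun x : ℝ ↦ (1 + s * x⁻¹) ^ (1 - s)) atTop (𝓝 1) := by
      simpa using ((tendsto_inv_atTop_zero.const_mul s).const_add 1).rpow_const
        (p := 1 - s) (Or.inl (by simp))
    refine h.congr' ?_
    filter_upwards [eventually_gt_atTop 0] with x hx
    rw [add_div, div_self hx.ne', div_eq_mul_inv]
  refine tendsto_of_tendsto_of_tendsto_of_le_of_le' tendsto_const_nhds hupper ?_ ?_
  · filter_upwards [eventually_gt_atTop 0] with x hx
    rw [le_div_iff₀ (Gamma_pos_of_pos (by linarith)), one_mul, mul_comm]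
    exact Gamma_add_le_Gamma_mul_rpow hx hs0 hs1
  · filter_upwards [eventually_gt_atTop 0] with x hx
    have hxs : 0 < x + s := by linarith
    -- the same bound, applied at `x + s` with step `1 - s`, controls `Γ (x + 1) = x Γ x`
    have h := Gamma_add_le_Gamma_mul_rpow hxs (sub_nonneg.2 hs1) (by linarith : 1 - s ≤ 1)
    rw [show x + s + (1 - s) = x + 1 by ring, Gamma_add_one hx.ne'] at h
    have hpow : x ^ s = x / x ^ (1 - s) := by
      rw [eq_div_iff (rpow_pos_of_pos hx _).ne', ← rpow_add hx, add_sub_cancel, rpow_one]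
    rw [div_le_iff₀ (Gamma_pos_of_pos hxs), div_rpow hxs.le hx.le, hpow]
    calc x / x ^ (1 - s) * Gamma x = x * Gamma x / x ^ (1 - s) := by ring
      _ ≤ Gamma (x + s) * (x + s) ^ (1 - s) / x ^ (1 - s) := by gcongr
      _ = _ := by ring

theorem tendsto_rpow_mul_Gamma_div_Gamma_add_add_one {a : ℝ}
    (h : Tendsto (fun x ↦ x ^ a * Gamma x / Gamma (x + a)) atTop (𝓝 1)) :
    Tendsto (fun x ↦ x ^ (a + 1) * Gamma x / Gamma (x + (a + 1))) atTop (𝓝 1) := by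
  have hfrac : Tendsto (fun x : ℝ ↦ x / (x + a)) atTop (𝓝 1) := by
    have : Tendsto (fun x : ℝ ↦ (1 + a * x⁻¹)⁻¹) atTop (𝓝 1) := by
      simpa using ((tendsto_inv_atTop_zero.const_mul a).const_add 1).inv₀ (by simp)
    refine this.congr' ?_
    filter_upwards [eventually_gt_atTop 0] with x hx
    field_simp
  have hprod := h.mul hfrac
  rw [one_mul] at hprod
  refine hprod.congr' ?_
  filter_upwards [eventually_gt_atTop (max 0 (-a))] with x hx
  have hx0 : 0 < x := (le_max_left _ _).trans_lt hx
  have hxa : 0 < x + a := by linarith [(le_max_right 0 (-a)).trans_lt hx]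
  rw [← add_assoc, Gamma_add_one hxa.ne', rpow_add_one hx0.ne']
  field_simp [(Gamma_pos_of_pos hxa).ne']

theorem tendsto_rpow_mul_Gamma_div_Gamma_add {a : ℝ} (ha : 0 ≤ a) :
    Tendsto (fun x ↦ x ^ a * Gamma x / Gamma (x + a)) atTop (𝓝 1) := by
  have hnat : ∀ n : ℕ, Tendsto
      (fun x ↦ x ^ (a - ⌊a⌋₊ + n) * Gamma x / Gamma (x + (a - ⌊a⌋₊ + n))) atTop (𝓝 1) := by
    intro n
    induction n with
    | zero =>
      simpa using tendsto_rpow_mul_Gamma_div_Gamma_add_of_le_one (sub_nonneg.2 (Nat.floor_le ha))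
        (by linarith [Nat.lt_floor_add_one a])
    | succ n ih => simpa [add_assoc] using tendsto_rpow_mul_Gamma_div_Gamma_add_add_one ih
  simpa using hnat ⌊a⌋₊

theorem tendsto_rpow_mul_Gamma_div_Gamma_add_of_affine {a c : ℝ} (ha : 0 ≤ a) (hc : 0 < c)
    (κ : ℝ) :
    Tendsto (fun x ↦ x ^ a * (Gamma (x * c + κ) / Gamma (x * c + κ + a))) atTop
      (𝓝 (c ^ (-a))) := by
  have hu : Tendsto (fun x ↦ x * c + κ) atTop atTop :=
    tendsto_atTop_add_const_right _ κ (tendsto_id.atTop_mul_const hc)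
  have hfrac : Tendsto (fun x : ℝ ↦ x / (x * c + κ)) atTop (𝓝 c⁻¹) := by
    have : Tendsto (fun x : ℝ ↦ (c + κ * x⁻¹)⁻¹) atTop (𝓝 c⁻¹) := by
      simpa using
        ((tendsto_inv_atTop_zero.const_mul κ).const_add c).inv₀ (by simpa using hc.ne')
    refine this.congr' ?_
    filter_upwards [eventually_gt_atTop 0] with x hx
    field_simp
  have hprod := (hfrac.rpow_const (p := a) (Or.inl (inv_ne_zero hc.ne'))).mul
    ((tendsto_rpow_mul_Gamma_div_Gamma_add ha).comp hu)
  rw [mul_one, inv_rpow hc.le, ← rpow_neg hc.le] at hprod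
  refine hprod.congr' ?_
  filter_upwards [eventually_gt_atTop 0, hu.eventually_gt_atTop 0] with x hx hxu
  rw [Function.comp_apply, div_rpow hx.le hxu.le]
  field_simp [(rpow_pos_of_pos hxu a).ne']

end Real

theorem Complex.ofReal_rpow_mul_one_sub_rpow {p q t : ℝ} (ht0 : 0 ≤ t) (ht1 : t ≤ 1) :
    ((t ^ p * (1 - t) ^ q : ℝ) : ℂ) =
      (t : ℂ) ^ ((p + 1 : ℝ) - 1 : ℂ) * (1 - (t : ℂ)) ^ ((q + 1 : ℝ) - 1 : ℂ) := by
  rw [Complex.ofReal_mul, Complex.ofReal_cpow ht0, Complex.ofReal_cpow (sub_nonneg.2 ht1)]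
  push_cast
  ring_nf

theorem intervalIntegral.integral_mem_Icc_of_forall_mem_Icc {μ : MeasureTheory.Measure ℝ}
    [MeasureTheory.NullSingletonClass μ] {f g h : ℝ → ℝ} {a b : ℝ} (hab : a ≤ b)
    (hf : IntervalIntegrable f μ a b) (hg : IntervalIntegrable g μ a b)
    (hh : IntervalIntegrable h μ a b) (hfgh : ∀ x ∈ Set.Ioo a b, g x ∈ Set.Icc (f x) (h x)) :
    ∫ x in a..b, g x ∂μ ∈ Set.Icc (∫ x in a..b, f x ∂μ) (∫ x in a..b, h x ∂μ) :=
  ⟨intervalIntegral.integral_mono_on_of_le_Ioo hab hf hg fun x hx ↦ (hfgh x hx).1,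
    intervalIntegral.integral_mono_on_of_le_Ioo hab hg hh fun x hx ↦ (hfgh x hx).2⟩

theorem tendsto_of_tendsto_of_tendsto_of_mem_uIcc {ι α : Type*} [TopologicalSpace α]
    [LinearOrder α] [OrderTopology α] {f g h : ι → α} {l : Filter ι} {a : α}
    (hf : Tendsto f l (𝓝 a)) (hg : Tendsto g l (𝓝 a))
    (hfgh : ∀ᶠ x in l, h x ∈ Set.uIcc (f x) (g x)) : Tendsto h l (𝓝 a) := by
  have hmin := hf.min hg
  have hmax := hf.max hg
  rw [min_self] at hmin
  rw [max_self] at hmax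
  exact tendsto_of_tendsto_of_tendsto_of_le_of_le' hmin hmax
    (hfgh.mono fun _ hx ↦ hx.1) (hfgh.mono fun _ hx ↦ hx.2)

namespace Real

theorem intervalIntegrable_rpow_mul_one_sub_rpow {p q : ℝ} (hp : -1 < p) (hq : -1 < q) :
    IntervalIntegrable (fun t ↦ t ^ p * (1 - t) ^ q) MeasureTheory.volume 0 1 := by
  have h := Complex.betaIntegral_convergent (u := (p + 1 : ℝ)) (v := (q + 1 : ℝ))
    (by rw [Complex.ofReal_re]; linarith) (by rw [Complex.ofReal_re]; linarith)
  rw [intervalIntegrable_iff_integrableOn_Ioc_of_le zero_le_one] at h ⊢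
  exact (h.congr_fun (fun t ht ↦ (Complex.ofReal_rpow_mul_one_sub_rpow ht.1.le ht.2).symm)
    measurableSet_Ioc).re

theorem integral_rpow_mul_one_sub_rpow {p q : ℝ} (hp : -1 < p) (hq : -1 < q) :
    ∫ t in (0 : ℝ)..1, t ^ p * (1 - t) ^ q =
      Gamma (p + 1) * Gamma (q + 1) / Gamma (p + q + 2) := by
  have h := Complex.betaIntegral_eq_Gamma_mul_div (p + 1 : ℝ) (q + 1 : ℝ)
    (by rw [Complex.ofReal_re]; linarith) (by rw [Complex.ofReal_re]; linarith)
  rw [Complex.betaIntegral, ← Complex.ofReal_add, Complex.Gamma_ofReal, Complex.Gamma_ofReal,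
    Complex.Gamma_ofReal, show p + 1 + (q + 1) = p + q + 2 by ring] at h
  apply Complex.ofReal_injective
  push_cast
  rw [← h, ← intervalIntegral.integral_ofReal]
  refine intervalIntegral.integral_congr fun t ht ↦ ?_
  rw [Set.uIcc_of_le zero_le_one] at ht
  exact Complex.ofReal_rpow_mul_one_sub_rpow ht.1 ht.2

theorem one_sub_rpow_mem_Icc_of_le_one {c t : ℝ} (hc0 : 0 ≤ c) (hc1 : c ≤ 1) (ht : 0 < t) :
    1 - t ^ c ∈ Set.Icc (c * (1 - t)) (c * t ^ (c - 1) * (1 - t)) := by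
  have hat := rpow_one_add_le_one_add_mul_self (by linarith : -1 ≤ t - 1) hc0 hc1
  have hinv := rpow_one_add_le_one_add_mul_self
    (by linarith [inv_pos.2 ht] : -1 ≤ t⁻¹ - 1) hc0 hc1
  simp only [add_sub_cancel, inv_rpow ht.le] at hat hinv
  have htc : 0 < t ^ c := rpow_pos_of_pos ht c
  rw [rpow_sub_one ht.ne']
  constructor
  · linarith
  · rw [inv_le_iff_one_le_mul₀ htc] at hinv
    field_simp at hinv ⊢
    nlinarith

theorem one_sub_rpow_mem_Icc_of_one_le {c t : ℝ} (hc : 1 ≤ c) (ht : 0 < t) :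
    1 - t ^ c ∈ Set.Icc (c * t ^ (c - 1) * (1 - t)) (c * (1 - t)) := by
  have hat := one_add_mul_self_le_rpow_one_add (by linarith : -1 ≤ t - 1) hc
  have hinv := one_add_mul_self_le_rpow_one_add (by linarith [inv_pos.2 ht] : -1 ≤ t⁻¹ - 1) hc
  simp only [add_sub_cancel, inv_rpow ht.le] at hat hinv
  have htc : 0 < t ^ c := rpow_pos_of_pos ht c
  rw [rpow_sub_one ht.ne']
  constructor
  · rw [← mul_one (t ^ c)⁻¹, le_inv_mul_iff₀ htc] at hinv
    field_simp at hinv ⊢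
    nlinarith
  · linarith

theorem integral_sub_rpow_add_mem_uIcc {β c y : ℝ} (hβ : -1 < β) (hc : 0 < c) (hy : -1 < y)
    (hyc : 0 < y + c) :
    ∫ t in (0 : ℝ)..1, (t ^ y * (1 - t) ^ β - t ^ (y + c) * (1 - t) ^ β) ∈
      Set.uIcc (c * ∫ t in (0 : ℝ)..1, t ^ y * (1 - t) ^ (β + 1))
        (c * ∫ t in (0 : ℝ)..1, t ^ (y + c - 1) * (1 - t) ^ (β + 1)) := by
  have hdiff := (intervalIntegrable_rpow_mul_one_sub_rpow hy hβ).sub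
    (intervalIntegrable_rpow_mul_one_sub_rpow (p := y + c) (by linarith) hβ)
  have hfirst :=
    (intervalIntegrable_rpow_mul_one_sub_rpow (q := β + 1) hy (by linarith)).const_mul c
  have hsecond := (intervalIntegrable_rpow_mul_one_sub_rpow (by linarith : -1 < y + c - 1)
    (by linarith : -1 < β + 1)).const_mul c
  have hform : ∀ t ∈ Set.Ioo (0 : ℝ) 1, 0 ≤ t ^ y * (1 - t) ^ β ∧
      t ^ y * (1 - t) ^ β - t ^ (y + c) * (1 - t) ^ β = t ^ y * (1 - t) ^ β * (1 - t ^ c) ∧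
      c * (t ^ y * (1 - t) ^ (β + 1)) = t ^ y * (1 - t) ^ β * (c * (1 - t)) ∧
      c * (t ^ (y + c - 1) * (1 - t) ^ (β + 1)) =
        t ^ y * (1 - t) ^ β * (c * t ^ (c - 1) * (1 - t)) := by
    rintro t ⟨ht0, ht1⟩
    have h1t : 0 < 1 - t := sub_pos.2 ht1
    refine ⟨by positivity, by rw [rpow_add ht0]; ring, by rw [rpow_add_one h1t.ne']; ring, ?_⟩
    rw [add_sub_assoc, rpow_add ht0, rpow_add_one h1t.ne']
    ring
  rw [← intervalIntegral.integral_const_mul, ← intervalIntegral.integral_const_mul]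
  rcases le_total c 1 with hc1 | hc1
  · refine Set.Icc_subset_uIcc (intervalIntegral.integral_mem_Icc_of_forall_mem_Icc
      zero_le_one hfirst hdiff hsecond fun t ht ↦ ?_)
    obtain ⟨hw, hd, hl, hu⟩ := hform t ht
    have hb := one_sub_rpow_mem_Icc_of_le_one hc.le hc1 ht.1
    rw [hd, hl, hu]
    exact ⟨mul_le_mul_of_nonneg_left hb.1 hw, mul_le_mul_of_nonneg_left hb.2 hw⟩
  · refine Set.Icc_subset_uIcc' (intervalIntegral.integral_mem_Icc_of_forall_mem_Icc
      zero_le_one hsecond hdiff hfirst fun t ht ↦ ?_)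
    obtain ⟨hw, hd, hl, hu⟩ := hform t ht
    have hb := one_sub_rpow_mem_Icc_of_one_le hc1 ht.1
    rw [hd, hl, hu]
    exact ⟨mul_le_mul_of_nonneg_left hb.1 hw, mul_le_mul_of_nonneg_left hb.2 hw⟩

theorem Gamma_ratio_sub_mem_uIcc {β c y : ℝ} (hβ : -1 < β) (hc : 0 < c) (hy : -1 < y)
    (hyc : 0 < y + c) :
    Gamma (2 + β) * Gamma (1 + y) / Gamma (2 + β + y)
        - Gamma (2 + β) * Gamma (1 + (y + c)) / Gamma (2 + β + (y + c)) ∈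
      Set.uIcc ((1 + β) * c * Gamma (2 + β) * (Gamma (y + 1) / Gamma (y + 1 + (2 + β))))
        ((1 + β) * c * Gamma (2 + β) * (Gamma (y + c) / Gamma (y + c + (2 + β)))) := by
  have hmem :=
    Set.mem_image_of_mem ((1 + β) * ·) (integral_sub_rpow_add_mem_uIcc hβ hc hy hyc)
  rw [Set.image_const_mul_uIcc, intervalIntegral.integral_sub
    (intervalIntegrable_rpow_mul_one_sub_rpow hy hβ)
    (intervalIntegrable_rpow_mul_one_sub_rpow (p := y + c) (by linarith) hβ)] at hmem
  rw [integral_rpow_mul_one_sub_rpow hy hβ, integral_rpow_mul_one_sub_rpow (by linarith) hβ,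
    integral_rpow_mul_one_sub_rpow hy (by linarith),
    integral_rpow_mul_one_sub_rpow (by linarith) (by linarith),
    Gamma_add_one (by linarith : β + 1 ≠ 0)] at hmem
  rw [show 2 + β = (β + 1) + 1 by ring, Gamma_add_one (by linarith : β + 1 ≠ 0)]
  convert hmem using 1 <;> ring_nf

end Real

/-- For `α > -1`, `β > -1`, the quenched-threshold quiescent-time distribution
`P(T) = Γ(2+β)Γ(1+T(1+α))/Γ(2+β+T(1+α)) - Γ(2+β)Γ(1+(T+1)(1+α))/Γ(2+β+(T+1)(1+α))`
satisfies `T^{2+β} · P(T) → (1+β)Γ(2+β)(1+α)^{-1-β}` as `T → ∞`; the decay exponent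
`-(2+β)` depends only on the threshold exponent `β`. -/
theorem stmt_6 (α β : ℝ) (hα : -1 < α) (hβ : -1 < β)
    (P : ℕ → ℝ)
    (hP : ∀ T : ℕ, 1 ≤ T →
      P T = Real.Gamma (2 + β) * Real.Gamma (1 + (T : ℝ) * (1 + α))
          / Real.Gamma (2 + β + (T : ℝ) * (1 + α))
        - Real.Gamma (2 + β) * Real.Gamma (1 + ((T : ℝ) + 1) * (1 + α))
          / Real.Gamma (2 + β + ((T : ℝ) + 1) * (1 + α))) :
    Tendsto (fun T : ℕ => (T : ℝ) ^ (2 + β) * P T) atTop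
      (𝓝 ((1 + β) * Real.Gamma (2 + β) * (1 + α) ^ (-1 - β))) := by
  have hc : 0 < 1 + α := by linarith
  have hbound : ∀ κ : ℝ, Tendsto (fun T : ℕ ↦ (T : ℝ) ^ (2 + β) *
      ((1 + β) * (1 + α) * Gamma (2 + β) *
        (Gamma (T * (1 + α) + κ) / Gamma (T * (1 + α) + κ + (2 + β))))) atTop
      (𝓝 ((1 + β) * Gamma (2 + β) * (1 + α) ^ (-1 - β))) := by
    intro κ
    have h := ((tendsto_rpow_mul_Gamma_div_Gamma_add_of_affine (a := 2 + β) (by linarith) hc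
      κ).comp tendsto_natCast_atTop_atTop).const_mul ((1 + β) * (1 + α) * Gamma (2 + β))
    rw [show -1 - β = -(2 + β) + 1 by ring, rpow_add_one hc.ne']
    convert h using 1
    · ext T
      simp only [Function.comp_apply]
      ring
    · congr 1
      ring
  refine tendsto_of_tendsto_of_tendsto_of_mem_uIcc (hbound 1) (hbound (1 + α)) ?_
  filter_upwards [eventually_ge_atTop 1] with T hT
  have hy : 0 ≤ (T : ℝ) * (1 + α) := by positivity
  rw [hP T hT, add_one_mul, ← Set.image_const_mul_uIcc]
  exact Set.mem_image_of_mem _ (Gamma_ratio_sub_mem_uIcc hβ hc (by linarith) (by linarith))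
end

section
/- Let 0 < η < 1. Then the equation −log(1 − η·s) = s·η/(1−η) has a unique solution s₀ in the open interval (1, 1/η), and this solution satisfies η < 1/s₀ ≤ (1+η)/2; equivalently 2/(1+η) ≤ s₀ < 1/η. In particular the exponential decay rate log(s₀) of the quiescent-time distribution vanishes like 1−η as η tends to 1. -/
/-!
Let `G(s) = -log(1 - ηs) - sη/(1-η)` on `[1, 1/η)`. Its derivative `η/(1-ηs) - η/(1-η)` is
positive for `s > 1`, so `G` is strictly increasing there and has at most one zero. Since
`log x < x - 1` at `x = 1/(1-η)`, `G(1) < 0`, while at the point where `1 - ηs = exp(-1/(1-η))`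
one has `G(s) = (1 - ηs)/(1-η) > 0`; the intermediate value theorem gives the zero `s₀`.
Finally `1 - η·2/(1+η) = (1-η)/(1+η)`, and comparing the series of
`log(1+η) - log(1-η) = ∑ 2η^(2k+1)/(2k+1)` with `∑ 2η^(2k+1) = 2η/(1-η²)` gives
`G(2/(1+η)) ≤ 0`, hence `2/(1+η) ≤ s₀`.
-/

open Set Real

theorem Real.log_one_add_sub_log_one_sub_le {x : ℝ} (h0 : 0 ≤ x) (h1 : x < 1) :
    log (1 + x) - log (1 - x) ≤ 2 * x / (1 - x ^ 2) := by
  have hx2 : x ^ 2 < 1 := by nlinarith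
  rw [div_eq_mul_inv]
  refine hasSum_le (fun k => ?_) (hasSum_log_sub_log_of_abs_lt_one (by rwa [abs_of_nonneg h0]))
    ((hasSum_geometric_of_lt_one (sq_nonneg x) hx2).mul_left (2 * x))
  have hk : 1 / (2 * (k : ℝ) + 1) ≤ 1 := by
    rw [div_le_one (by positivity)]
    linarith [k.cast_nonneg (α := ℝ)]
  have hpow : 0 ≤ (x ^ 2) ^ k * x := by positivity
  rw [pow_succ, pow_mul]
  nlinarith

theorem one_sub_mul_pos_of_lt_one_div {η s : ℝ} (hη0 : 0 < η) (hs : s < 1 / η) :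
    0 < 1 - η * s := by
  rw [lt_div_iff₀ hη0] at hs
  linarith

/-- The zero of `poleDefect η` on `(1, 1/η)` is the pole `s₀` of the generating function `P̂`. -/
noncomputable def poleDefect (η s : ℝ) : ℝ := -log (1 - η * s) - s * η / (1 - η)

namespace poleDefect

variable {η : ℝ}

theorem eq_zero_iff {s : ℝ} : poleDefect η s = 0 ↔ -log (1 - η * s) = s * η / (1 - η) :=
  sub_eq_zero

theorem hasDerivAt {s : ℝ} (hs : 1 - η * s ≠ 0) :
    HasDerivAt (poleDefect η) (η / (1 - η * s) - η / (1 - η)) s := by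
  have hlin : HasDerivAt (fun s : ℝ => 1 - η * s) (-η) s := by
    simpa using ((hasDerivAt_id s).const_mul η).const_sub 1
  have hdiv : HasDerivAt (fun s : ℝ => s * η / (1 - η)) (η / (1 - η)) s := by
    simpa [mul_div_assoc] using (hasDerivAt_id s).mul_const (η / (1 - η))
  refine ((hlin.log hs).neg.sub hdiv).congr_deriv ?_
  ring

theorem continuousOn (hη0 : 0 < η) : ContinuousOn (poleDefect η) (Ico 1 (1 / η)) :=
  fun _ hs =>
    (hasDerivAt (one_sub_mul_pos_of_lt_one_div hη0 hs.2).ne').continuousAt.continuousWithinAt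

theorem strictMonoOn (hη0 : 0 < η) : StrictMonoOn (poleDefect η) (Ico 1 (1 / η)) := by
  refine strictMonoOn_of_deriv_pos (convex_Ico 1 (1 / η)) (continuousOn hη0) fun s hs => ?_
  rw [interior_Ico] at hs
  have hpos := one_sub_mul_pos_of_lt_one_div hη0 hs.2
  have hlt : 1 - η * s < 1 - η := by nlinarith [hs.1]
  rw [(hasDerivAt hpos.ne').deriv, sub_pos]
  exact div_lt_div_of_pos_left hη0 hpos hlt

theorem one_neg (hη0 : 0 < η) (hη1 : η < 1) : poleDefect η 1 < 0 := by
  have h1η : 0 < 1 - η := by linarith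
  have hlog := log_lt_sub_one_of_pos (inv_pos.2 h1η) (by
    rw [Ne, inv_eq_one]
    linarith)
  have hsub : (1 - η)⁻¹ - 1 = η / (1 - η) := by
    field_simp
    ring
  rw [log_inv, hsub] at hlog
  simpa [poleDefect] using hlog

theorem exists_pos (hη0 : 0 < η) (hη1 : η < 1) : ∃ s ∈ Ioo 1 (1 / η), 0 < poleDefect η s := by
  have h1η : 0 < 1 - η := by linarith
  set e := exp (-(1 - η)⁻¹)
  have he : e < 1 - η := by
    have : -(1 - η)⁻¹ < log (1 - η) := by
      linarith [one_sub_inv_le_log_of_pos h1η]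
    exact (exp_lt_exp.2 this).trans_eq (exp_log h1η)
  have hs : 1 - η * ((1 - e) / η) = e := by
    field_simp
    ring
  refine ⟨(1 - e) / η, ⟨?_, ?_⟩, ?_⟩
  · rw [lt_div_iff₀ hη0]
    linarith
  · exact div_lt_div_of_pos_right (by linarith [exp_pos (-(1 - η)⁻¹)]) hη0
  · have hval : poleDefect η ((1 - e) / η) = e / (1 - η) := by
      rw [poleDefect, hs, log_exp]
      field_simp
      ring
    rw [hval]
    exact div_pos (exp_pos _) h1η

theorem exists_eq_zero (hη0 : 0 < η) (hη1 : η < 1) :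
    ∃ s ∈ Ioo 1 (1 / η), poleDefect η s = 0 := by
  obtain ⟨t, ht, hpos⟩ := exists_pos hη0 hη1
  have hcont : ContinuousOn (poleDefect η) (Icc 1 t) :=
    (continuousOn hη0).mono (Icc_subset_Ico_right ht.2)
  obtain ⟨s, hs, hzero⟩ := intermediate_value_Ioo ht.1.le hcont ⟨one_neg hη0 hη1, hpos⟩
  exact ⟨s, ⟨hs.1, hs.2.trans ht.2⟩, hzero⟩

theorem two_div_one_add_nonpos (hη0 : 0 < η) (hη1 : η < 1) :
    poleDefect η (2 / (1 + η)) ≤ 0 := by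
  have h1η : 0 < 1 - η := by linarith
  have h1η' : 0 < 1 + η := by linarith
  have hsub : 1 - η * (2 / (1 + η)) = (1 - η) / (1 + η) := by
    field_simp
    ring
  have hrhs : 2 / (1 + η) * η / (1 - η) = 2 * η / (1 - η ^ 2) := by
    have : 1 - η ^ 2 ≠ 0 := by nlinarith
    field_simp
    ring
  rw [poleDefect, hsub, hrhs, log_div h1η.ne' h1η'.ne']
  linarith [log_one_add_sub_log_one_sub_le hη0.le hη1]

end poleDefect

/-- For `0 < η < 1`, the equation `-log(1 - ηs) = sη/(1-η)` has a unique solution `s₀`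
in the open interval `(1, 1/η)`, and it satisfies `2/(1+η) ≤ s₀ < 1/η` (equivalently
`η < 1/s₀ ≤ (1+η)/2`); hence the exponential decay rate `log s₀` of the quiescent-time
distribution vanishes like `1-η` as `η → 1`. -/
theorem stmt_8 (η : ℝ) (hη0 : 0 < η) (hη1 : η < 1) :
    ∃ s₀ : ℝ, (s₀ ∈ Set.Ioo 1 (1 / η) ∧ -Real.log (1 - η * s₀) = s₀ * η / (1 - η)) ∧
      (∀ s ∈ Set.Ioo (1 : ℝ) (1 / η),
        -Real.log (1 - η * s) = s * η / (1 - η) → s = s₀) ∧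
      2 / (1 + η) ≤ s₀ ∧ s₀ < 1 / η := by
  obtain ⟨s₀, hs₀, hzero⟩ := poleDefect.exists_eq_zero hη0 hη1
  have hmono := poleDefect.strictMonoOn hη0
  have hs₀' : s₀ ∈ Ico 1 (1 / η) := Ioo_subset_Ico_self hs₀
  refine ⟨s₀, ⟨hs₀, poleDefect.eq_zero_iff.1 hzero⟩, fun s hs hroot => ?_, ?_, hs₀.2⟩
  · refine hmono.injOn (Ioo_subset_Ico_self hs) hs₀' ?_
    rw [poleDefect.eq_zero_iff.2 hroot, hzero]
  · have hc : 2 / (1 + η) ∈ Ico 1 (1 / η) := by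
      constructor
      · rw [le_div_iff₀ (by linarith)]
        linarith
      · rw [div_lt_div_iff₀ (by linarith) hη0]
        nlinarith
    rw [← hmono.le_iff_le hc hs₀', hzero]
    exact poleDefect.two_div_one_add_nonpos hη0 hη1
end

section
/- Let μ_F and μ_G be Borel probability measures on [0,1], set F(u) = μ_F([0,u)), A(n) = ∫₀¹ F(y)ⁿ dμ_G(y), B(n) = ∫₀¹ F(y)ⁿ(1−F(y)) dμ_G(y), and fix η ∈ [0,1). With the memory-η threshold process (X_t i.i.d. μ_F; Z₀ = Y₀, Z_t = Z_{t−1} with probability η and Z_t = Y_t ~ μ_G with probability 1−η, all independent) and P_η(T) the probability of {X_t < Z_t for all t < T and X_T ≥ Z_T}, one has for every T ≥ 1: P_η(T) ≤ [η·A(1) + (1−η)·A(1)·B(0)] · (η + (1−η)·A(1))^{T−1}. In particular, for any η < 1 the quiescent-time distribution is bounded above by an exponentially decaying function of T. -/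
open MeasureTheory ProbabilityTheory

/-!
Survival up to time `t` is an event of the variables with time index `< t`, hence independent of
`(X t, Y t, ε t)`. At step `t ≥ 1` the threshold is either kept (probability `η`; we then only
use survival up to `t`) or redrawn, in which case the comparison is with the fresh `Y t`, of
probability `A(1) = P(X t < Y t)` for survival and `B(0) = 1 - A(1)` for exit. This gives
`P(survive to t + 1) ≤ P(survive to t) · (η + (1 - η) A(1))` with `P(survive to 1) = A(1)`, and
the exit step contributes the factor `η + (1 - η) B(0)`.
-/

section Independence

variable {Ω ι : Type*}

abbrev generatedBy (f : ι → Ω → ℝ) (s : Set ι) : MeasurableSpace Ω :=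
  ⨆ i ∈ s, MeasurableSpace.comap (f i) inferInstance

lemma measurable_generatedBy {f : ι → Ω → ℝ} {s : Set ι} {i : ι} (hi : i ∈ s) :
    Measurable[generatedBy f s] (f i) :=
  (comap_measurable (f i)).mono
    (le_biSup (fun j => MeasurableSpace.comap (f j) inferInstance) hi) le_rfl

lemma ProbabilityTheory.iIndepFun.measureReal_inter_of_disjoint [MeasurableSpace Ω]
    {P : Measure Ω} {f : ι → Ω → ℝ} (hf : ∀ i, Measurable (f i))
    (hindep : iIndepFun f P) {s t : Set ι} (hst : Disjoint s t) {A B : Set Ω}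
    (hA : MeasurableSet[generatedBy f s] A) (hB : MeasurableSet[generatedBy f t] B) :
    P.real (A ∩ B) = P.real A * P.real B := by
  rw [measureReal_def, measureReal_def, measureReal_def, ← ENNReal.toReal_mul,
    (Indep_iff _ _ _).mp (indep_iSup_of_disjoint (fun i => (hf i).comap_le) hindep.iIndep hst)
      A B hA hB]

end Independence

section Law

variable {Ω : Type*} [MeasurableSpace Ω] {P : Measure Ω}

lemma ProbabilityTheory.IndepFun.measureReal_lt_eq_integral [IsFiniteMeasure P]
    {X Y : Ω → ℝ} (hX : Measurable X) (hY : Measurable Y) (hind : IndepFun X Y P) :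
    P.real {ω | X ω < Y ω} = ∫ y, (P.map X (Set.Iio y)).toReal ∂(P.map Y) := by
  have hlt : MeasurableSet {p : ℝ × ℝ | p.1 < p.2} :=
    measurableSet_lt measurable_fst measurable_snd
  have hmono : Monotone fun y => P.map X (Set.Iio y) :=
    fun _ _ h => measure_mono (Set.Iio_subset_Iio h)
  calc P.real {ω | X ω < Y ω} = (P.map (fun ω => (X ω, Y ω)) {p | p.1 < p.2}).toReal := by
        rw [Measure.map_apply (hX.prodMk hY) hlt]; rfl
    _ = (∫⁻ y, P.map X (Set.Iio y) ∂(P.map Y)).toReal := by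
        rw [(indepFun_iff_map_prod_eq_prod_map_map hX.aemeasurable hY.aemeasurable).mp hind,
          Measure.prod_apply_symm hlt]
        rfl
    _ = _ := (integral_toReal hmono.measurable.aemeasurable
        (.of_forall fun _ => measure_lt_top _ _)).symm

lemma measure_Iio_eq_measure_Ico {μ : Measure ℝ} {a y : ℝ} (h : μ (Set.Iio a) = 0)
    (hay : a ≤ y) :
    μ (Set.Iio y) = μ (Set.Ico a y) := by
  rw [← Set.Iio_union_Ico_eq_Iio hay]
  exact measure_congr (union_ae_eq_right.mpr (measure_mono_null Set.sdiff_subset h))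

lemma measureReal_lt_eq_setIntegral_measure_Ico [IsFiniteMeasure P]
    {μF μG : Measure ℝ} [IsProbabilityMeasure μF] [IsProbabilityMeasure μG]
    (hμF : μF (Set.Icc 0 1) = 1) (hμG : μG (Set.Icc 0 1) = 1) {X Y : Ω → ℝ}
    (hX : Measurable X) (hY : Measurable Y) (hXlaw : P.map X = μF) (hYlaw : P.map Y = μG)
    (hind : IndepFun X Y P) :
    P.real {ω | X ω < Y ω} = ∫ y in Set.Icc (0:ℝ) 1, (μF (Set.Ico 0 y)).toReal ∂μG := by
  have hneg : μF (Set.Iio 0) = 0 :=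
    measure_mono_null (fun x (hx : x < 0) (hx' : x ∈ Set.Icc (0:ℝ) 1) => hx.not_ge hx'.1)
      ((prob_compl_eq_zero_iff measurableSet_Icc).mpr hμF)
  calc P.real {ω | X ω < Y ω} = ∫ y, (μF (Set.Iio y)).toReal ∂μG := by
        rw [hind.measureReal_lt_eq_integral hX hY, hXlaw, hYlaw]
    _ = ∫ y in Set.Icc (0:ℝ) 1, (μF (Set.Iio y)).toReal ∂μG := by
        rw [Measure.restrict_eq_self_of_ae_mem (s := Set.Icc (0:ℝ) 1)
          ((mem_ae_iff_prob_eq_one measurableSet_Icc).mpr hμG)]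
    _ = _ := setIntegral_congr_fun measurableSet_Icc fun y hy => by
        rw [measure_Iio_eq_measure_Ico hneg hy.1]

lemma setIntegral_one_sub_measure_Ico {μF μG : Measure ℝ} [IsProbabilityMeasure μF]
    [IsFiniteMeasure μG] (hμG : μG (Set.Icc 0 1) = 1) :
    ∫ y in Set.Icc (0:ℝ) 1, (1 - (μF (Set.Ico 0 y)).toReal) ∂μG
      = 1 - ∫ y in Set.Icc (0:ℝ) 1, (μF (Set.Ico 0 y)).toReal ∂μG := by
  have hmono : Monotone fun y => (μF (Set.Ico 0 y)).toReal := fun _ _ h =>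
    ENNReal.toReal_mono (measure_ne_top _ _) (measure_mono (Set.Ico_subset_Ico_right h))
  have hint : Integrable (fun y => (μF (Set.Ico 0 y)).toReal) (μG.restrict (Set.Icc 0 1)) :=
    .of_bound hmono.measurable.aestronglyMeasurable 1 (.of_forall fun _ => by
      rw [Real.norm_of_nonneg ENNReal.toReal_nonneg]; exact measureReal_le_one)
  rw [integral_sub (integrable_const 1) hint]
  simp [measureReal_def, hμG]

lemma measureReal_eq_one_and_ne_one_of_map_eq {e : Ω → ℝ}
    (he : Measurable e) {η : ℝ} (hη₀ : 0 ≤ η) (hη₁ : η ≤ 1)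
    (hlaw : P.map e
      = ENNReal.ofReal η • Measure.dirac 1 + ENNReal.ofReal (1 - η) • Measure.dirac 0) :
    P.real {ω | e ω = 1} = η ∧ P.real {ω | e ω ≠ 1} = 1 - η := by
  have hone : P {ω | e ω = 1} = ENNReal.ofReal η := by
    rw [show {ω | e ω = 1} = e ⁻¹' {1} from rfl,
      ← Measure.map_apply he (measurableSet_singleton 1), hlaw]
    simp
  have hne : P {ω | e ω ≠ 1} = ENNReal.ofReal (1 - η) := by
    rw [show {ω | e ω ≠ 1} = e ⁻¹' {1}ᶜ from rfl,
      ← Measure.map_apply he (measurableSet_singleton 1).compl, hlaw]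
    simp
  simp [measureReal_def, hone, hne, hη₀, hη₁]

end Law

section Model

variable {Ω : Type*} {X Y ε Z : ℕ → Ω → ℝ}

def survival (X Z : ℕ → Ω → ℝ) (T : ℕ) : Set Ω := {ω | ∀ t < T, X t ω < Z t ω}

lemma survival_succ (T : ℕ) :
    survival X Z (T + 1) = survival X Z T ∩ {ω | X T ω < Z T ω} := by
  ext ω
  exact Nat.forall_lt_succ_right

def timeIndex : ℕ ⊕ ℕ ⊕ ℕ → ℕ := Sum.elim id (Sum.elim id id)

abbrev past (X Y ε : ℕ → Ω → ℝ) (T : ℕ) : MeasurableSpace Ω :=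
  generatedBy (Sum.elim X (Sum.elim Y ε)) {i | timeIndex i < T}

lemma measurable_past_state {t T : ℕ} (ht : t < T) : Measurable[past X Y ε T] (X t) :=
  measurable_generatedBy (f := Sum.elim X (Sum.elim Y ε)) (i := Sum.inl t) ht

lemma measurable_past_candidate {t T : ℕ} (ht : t < T) : Measurable[past X Y ε T] (Y t) :=
  measurable_generatedBy (f := Sum.elim X (Sum.elim Y ε)) (i := Sum.inr (Sum.inl t)) ht

lemma measurable_past_coin {t T : ℕ} (ht : t < T) : Measurable[past X Y ε T] (ε t) :=
  measurable_generatedBy (f := Sum.elim X (Sum.elim Y ε)) (i := Sum.inr (Sum.inr t)) ht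

lemma measurable_past_threshold (hZ0 : Z 0 = Y 0)
    (hZs : ∀ t ω, Z (t + 1) ω = if ε (t + 1) ω = 1 then Z t ω else Y (t + 1) ω)
    {t T : ℕ} (ht : t < T) : Measurable[past X Y ε T] (Z t) := by
  induction t with
  | zero => rw [hZ0]; exact measurable_past_candidate ht
  | succ t ih =>
    rw [show Z (t + 1) = _ from funext (hZs t)]
    exact Measurable.ite (measurable_past_coin ht (measurableSet_singleton 1)) (ih (by omega))
      (measurable_past_candidate ht)

lemma measurableSet_past_survival (hZ0 : Z 0 = Y 0)
    (hZs : ∀ t ω, Z (t + 1) ω = if ε (t + 1) ω = 1 then Z t ω else Y (t + 1) ω) (T : ℕ) :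
    MeasurableSet[past X Y ε T] (survival X Z T) := by
  have : survival X Z T = ⋂ t ∈ Set.Iio T, {ω | X t ω < Z t ω} := by
    ext; simp [survival]
  rw [this]
  exact .biInter (Set.to_countable _) fun t ht =>
    measurableSet_lt (measurable_past_state ht) (measurable_past_threshold hZ0 hZs ht)

variable [MeasurableSpace Ω] {P : Measure Ω} [IsFiniteMeasure P]

lemma measureReal_inter_le_keep_add_redraw
    (hX : ∀ t, Measurable (X t)) (hY : ∀ t, Measurable (Y t)) (hε : ∀ t, Measurable (ε t))
    (hindep : iIndepFun (Sum.elim X (Sum.elim Y ε)) P)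
    (hZs : ∀ t ω, Z (t + 1) ω = if ε (t + 1) ω = 1 then Z t ω else Y (t + 1) ω)
    (R : ℝ → ℝ → Prop) (hR : MeasurableSet {p : ℝ × ℝ | R p.1 p.2})
    {t : ℕ} {S : Set Ω} (hS : MeasurableSet[past X Y ε (t + 1)] S) :
    P.real (S ∩ {ω | R (X (t + 1) ω) (Z (t + 1) ω)})
      ≤ P.real S * (P.real {ω | ε (t + 1) ω = 1}
        + P.real {ω | ε (t + 1) ω ≠ 1} * P.real {ω | R (X (t + 1) ω) (Y (t + 1) ω)}) := by
  set f := Sum.elim X (Sum.elim Y ε)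
  have hf : ∀ i, Measurable (f i) := by rintro (t | t | t) <;> simp [f, hX, hY, hε]
  set keep := {ω | ε (t + 1) ω = 1}
  set redrawn := {ω | R (X (t + 1) ω) (Y (t + 1) ω)}
  have hsub :
      S ∩ {ω | R (X (t + 1) ω) (Z (t + 1) ω)} ⊆ S ∩ keep ∪ S ∩ (keepᶜ ∩ redrawn) := by
    rintro ω ⟨hωS, hωR⟩
    by_cases hk : ε (t + 1) ω = 1
    · exact .inl ⟨hωS, hk⟩
    · have hωR : R (X (t + 1) ω) (Z (t + 1) ω) := hωR
      rw [hZs, if_neg hk] at hωR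
      exact .inr ⟨hωS, hk, hωR⟩
  have hkeep (s : Set (ℕ ⊕ ℕ ⊕ ℕ)) (hs : Sum.inr (Sum.inr (t + 1)) ∈ s) :
      MeasurableSet[generatedBy f s] keep :=
    measurable_generatedBy hs (measurableSet_singleton 1)
  have hredrawn (s : Set (ℕ ⊕ ℕ ⊕ ℕ)) (hX : Sum.inl (t + 1) ∈ s)
      (hY : Sum.inr (Sum.inl (t + 1)) ∈ s) : MeasurableSet[generatedBy f s] redrawn :=
    ((measurable_generatedBy hX).prodMk (measurable_generatedBy hY)) hR
  have hnow : MeasurableSet[generatedBy f {i | timeIndex i = t + 1}] (keepᶜ ∩ redrawn) :=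
    (hkeep {i | timeIndex i = t + 1} rfl).compl.inter (hredrawn _ rfl rfl)
  have hdisj : Disjoint {i | timeIndex i < t + 1} {i | timeIndex i = t + 1} :=
    Set.disjoint_left.mpr fun i hlt heq => (Nat.ne_of_lt hlt) heq
  calc P.real (S ∩ {ω | R (X (t + 1) ω) (Z (t + 1) ω)})
      ≤ P.real (S ∩ keep ∪ S ∩ (keepᶜ ∩ redrawn)) := measureReal_mono hsub
    _ ≤ P.real (S ∩ keep) + P.real (S ∩ (keepᶜ ∩ redrawn)) := measureReal_union_le _ _
    _ = P.real S * (P.real keep + P.real keepᶜ * P.real redrawn) := by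
      rw [hindep.measureReal_inter_of_disjoint hf hdisj hS (hkeep _ rfl),
        hindep.measureReal_inter_of_disjoint hf hdisj hS hnow,
        hindep.measureReal_inter_of_disjoint hf (s := {Sum.inr (Sum.inr (t + 1))})
          (t := {Sum.inl (t + 1), Sum.inr (Sum.inl (t + 1))}) (by simp)
          (hkeep _ (Set.mem_singleton _)).compl (hredrawn _ (by simp) (by simp))]
      ring

lemma measureReal_survival_le
    (hX : ∀ t, Measurable (X t)) (hY : ∀ t, Measurable (Y t)) (hε : ∀ t, Measurable (ε t))
    (hindep : iIndepFun (Sum.elim X (Sum.elim Y ε)) P) (hZ0 : Z 0 = Y 0)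
    (hZs : ∀ t ω, Z (t + 1) ω = if ε (t + 1) ω = 1 then Z t ω else Y (t + 1) ω)
    {a p q : ℝ} (hlt : ∀ t, P.real {ω | X t ω < Y t ω} = a)
    (hkeep : ∀ t, P.real {ω | ε t ω = 1} = p) (hredraw : ∀ t, P.real {ω | ε t ω ≠ 1} = q)
    (k : ℕ) : P.real (survival X Z (k + 1)) ≤ a * (p + q * a) ^ k := by
  induction k with
  | zero =>
    have hsurv1 : survival X Z 1 = {ω | X 0 ω < Y 0 ω} := by ext; simp [survival, hZ0]
    rw [hsurv1, hlt, pow_zero, mul_one]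
  | succ k ih =>
    have hfactor : 0 ≤ p + q * a := by rw [← hkeep 0, ← hredraw 0, ← hlt 0]; positivity
    calc P.real (survival X Z (k + 1 + 1))
        ≤ P.real (survival X Z (k + 1)) * (p + q * a) := by
          rw [survival_succ, ← hkeep, ← hredraw, ← hlt (k + 1)]
          exact measureReal_inter_le_keep_add_redraw hX hY hε hindep hZs (· < ·)
            (measurableSet_lt measurable_fst measurable_snd)
            (measurableSet_past_survival hZ0 hZs _)
      _ ≤ a * (p + q * a) ^ k * (p + q * a) := mul_le_mul_of_nonneg_right ih hfactor
      _ = a * (p + q * a) ^ (k + 1) := by ring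

end Model

/-- Threshold-of-instability model with memory parameter `η ∈ [0,1)`: with states `X_t`
i.i.d. `μF`, candidate thresholds `Y_t` i.i.d. `μG`, Bernoulli(η) variables `ε_t`
(`{0,1}`-valued, deciding whether the threshold is kept or redrawn), all mutually
independent, and `Z₀ = Y₀`, `Z_{t+1} = Z_t` if `ε_{t+1} = 1`, `Z_{t+1} = Y_{t+1}`
otherwise, the quiescent-time probability satisfies, for every `T ≥ 1`,
`P_η(T) ≤ (η A(1) + (1-η) A(1) B(0)) · (η + (1-η) A(1))^{T-1}`,
where `F(u) = μF([0,u))`, `A(1) = ∫₀¹ F dμG`, `B(0) = ∫₀¹ (1-F) dμG`; in particular for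
any `η < 1` the quiescent-time distribution is bounded by an exponentially decaying
function of `T`. -/
theorem stmt_10 {Ω : Type*} [MeasurableSpace Ω] (P : Measure Ω) [IsProbabilityMeasure P]
    (μF μG : Measure ℝ) [IsProbabilityMeasure μF] [IsProbabilityMeasure μG]
    (hμF : μF (Set.Icc 0 1) = 1) (hμG : μG (Set.Icc 0 1) = 1)
    (η : ℝ) (hη : η ∈ Set.Ico (0:ℝ) 1)
    (X Y ε : ℕ → Ω → ℝ)
    (hX : ∀ t, Measurable (X t)) (hY : ∀ t, Measurable (Y t)) (hε : ∀ t, Measurable (ε t))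
    (hXlaw : ∀ t, P.map (X t) = μF) (hYlaw : ∀ t, P.map (Y t) = μG)
    (hεlaw : ∀ t, P.map (ε t)
      = ENNReal.ofReal η • Measure.dirac (1:ℝ) + ENNReal.ofReal (1 - η) • Measure.dirac (0:ℝ))
    (hindep : iIndepFun (Sum.elim X (Sum.elim Y ε)) P)
    (Z : ℕ → Ω → ℝ)
    (hZ0 : Z 0 = Y 0)
    (hZs : ∀ t ω, Z (t + 1) ω = if ε (t + 1) ω = 1 then Z t ω else Y (t + 1) ω)
    (T : ℕ) (hT : 1 ≤ T) :
    (P {ω | (∀ t < T, X t ω < Z t ω) ∧ Z T ω ≤ X T ω}).toReal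
      ≤ (η * (∫ y in Set.Icc (0:ℝ) 1, (μF (Set.Ico 0 y)).toReal ∂μG)
          + (1 - η) * (∫ y in Set.Icc (0:ℝ) 1, (μF (Set.Ico 0 y)).toReal ∂μG)
            * (∫ y in Set.Icc (0:ℝ) 1, (1 - (μF (Set.Ico 0 y)).toReal) ∂μG))
        * (η + (1 - η) * (∫ y in Set.Icc (0:ℝ) 1, (μF (Set.Ico 0 y)).toReal ∂μG)) ^ (T - 1) := by
  obtain ⟨hη₀, hη₁⟩ := hη
  obtain ⟨k, rfl⟩ : ∃ k, T = k + 1 := ⟨T - 1, by omega⟩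
  set a := ∫ y in Set.Icc (0:ℝ) 1, (μF (Set.Ico 0 y)).toReal ∂μG
  have hlt (t : ℕ) : P.real {ω | X t ω < Y t ω} = a :=
    measureReal_lt_eq_setIntegral_measure_Ico hμF hμG (hX t) (hY t) (hXlaw t) (hYlaw t)
      (by simpa using hindep.indepFun (show (Sum.inl t : ℕ ⊕ ℕ ⊕ ℕ) ≠ .inr (.inl t) by simp))
  have hge (t : ℕ) : P.real {ω | Y t ω ≤ X t ω} = 1 - a := by
    rw [← hlt t, ← probReal_compl_eq_one_sub (measurableSet_lt (hX t) (hY t))]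
    congr 1
    ext; simp
  have hcoin (t : ℕ) := measureReal_eq_one_and_ne_one_of_map_eq (hε t) hη₀ hη₁.le (hεlaw t)
  have hsurv := measureReal_survival_le hX hY hε hindep hZ0 hZs hlt (fun t => (hcoin t).1)
    (fun t => (hcoin t).2) k
  rw [setIntegral_one_sub_measure_Ico hμG, Nat.add_sub_cancel]
  calc (P {ω | (∀ t < k + 1, X t ω < Z t ω) ∧ Z (k + 1) ω ≤ X (k + 1) ω}).toReal
      ≤ P.real (survival X Z (k + 1)) * (P.real {ω | ε (k + 1) ω = 1}
          + P.real {ω | ε (k + 1) ω ≠ 1} * P.real {ω | Y (k + 1) ω ≤ X (k + 1) ω}) :=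
        measureReal_inter_le_keep_add_redraw hX hY hε hindep hZs (fun x z => z ≤ x)
          (measurableSet_le measurable_snd measurable_fst)
          (measurableSet_past_survival hZ0 hZs _)
    _ ≤ a * (η + (1 - η) * a) ^ k * (P.real {ω | ε (k + 1) ω = 1}
          + P.real {ω | ε (k + 1) ω ≠ 1} * P.real {ω | Y (k + 1) ω ≤ X (k + 1) ω}) :=
        mul_le_mul_of_nonneg_right hsurv (by positivity)
    _ = _ := by rw [(hcoin _).1, (hcoin _).2, hge]; ring
end

section
/- Let 0 ≤ η < 1 and consider the threshold-of-instability process with uniform state and threshold distributions on [0,1] and memory parameter η (X_t i.i.d. uniform; Z₀ uniform, Z_t = Z_{t−1} with probability η and Z_t a fresh uniform variable with probability 1−η, all independent). Then the quiescent-time distribution P_η(T) = Pr[X_t < Z_t for all t < T and X_T ≥ Z_T] satisfies P_η(T) ≤ (1/2)·((1+η)/2)^T for all natural numbers T. -/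
/-!
On the quiescent event, every step `t ≤ T` satisfies: either the threshold was kept
(`t ≠ 0` and `ε t = 1`), or it is the fresh `Y t`, and then `X t < Y t` for `t < T` and
`Y t ≤ X t` at `t = T`. These step events are determined by the disjoint blocks
`(X t, Y t, ε t)` of the independent family, so their intersection has probability
`∏ t ≤ T, (1 + Pr[threshold kept at t]) / 2 = 1/2 · ((1 + η)/2)^T`, since for independent
atomless `X`, `Y` symmetry gives `Pr[X < Y] = Pr[Y ≤ X] = 1/2`.
-/

open MeasureTheory ProbabilityTheory

namespace ProbabilityTheory

variable {ι κ Ω E : Type*} {mΩ : MeasurableSpace Ω} {P : Measure Ω} [MeasurableSpace E]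

lemma iIndepFun.curry {X : ι → κ → Ω → E} (mX : ∀ i j, Measurable (X i j))
    (h : iIndepFun (fun p : ι × κ ↦ X p.1 p.2) P) :
    iIndepFun (fun i ω j ↦ X i j ω) P := by
  have := h.isProbabilityMeasure
  have hblock (i : ι) : P.map (fun ω j ↦ X i j ω) = Measure.infinitePi fun j ↦ P.map (X i j) :=
    (h.precomp (Prod.mk_right_injective i)).map_fun_eq_infinitePi_map (mX i)
  rw [iIndepFun_iff_map_fun_eq_infinitePi_map fun i ↦ measurable_pi_lambda _ (mX i)]
  simp_rw [hblock]
  have hjoint : Measurable fun ω (p : ι × κ) ↦ X p.1 p.2 ω :=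
    measurable_pi_lambda _ fun p ↦ mX p.1 p.2
  calc P.map (fun ω i j ↦ X i j ω)
      = (P.map fun ω (p : ι × κ) ↦ X p.1 p.2 ω).map (MeasurableEquiv.curry ι κ E) := by
        rw [Measure.map_map (MeasurableEquiv.measurable _) hjoint]; rfl
    _ = _ := by
        have (i : ι) (j : κ) := Measure.isProbabilityMeasure_map (μ := P) (mX i j).aemeasurable
        rw [h.map_fun_eq_infinitePi_map (X := fun p : ι × κ ↦ X p.1 p.2) fun p ↦ mX p.1 p.2]
        exact Measure.infinitePi_map_curry fun i j ↦ P.map (X i j)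

lemma iIndepFun.prodMk_of_sumElim {X Y Z : ι → Ω → E} (hX : ∀ t, Measurable (X t))
    (hY : ∀ t, Measurable (Y t)) (hZ : ∀ t, Measurable (Z t))
    (h : iIndepFun (Sum.elim X (Sum.elim Y Z)) P) :
    iIndepFun (fun t ω ↦ ((X t ω, Y t ω), Z t ω)) P := by
  let g : ι × Fin 3 → ι ⊕ ι ⊕ ι := fun p ↦ ![.inl p.1, .inr (.inl p.1), .inr (.inr p.1)] p.2
  have hg : g.Injective := by
    rintro ⟨s, i⟩ ⟨t, j⟩ hst
    fin_cases i <;> fin_cases j <;> simp_all [g]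
  have hm : ∀ i, Measurable (Sum.elim X (Sum.elim Y Z) i) :=
    Sum.forall.2 ⟨hX, Sum.forall.2 ⟨hY, hZ⟩⟩
  exact ((h.precomp hg).curry (X := fun t j ↦ Sum.elim X (Sum.elim Y Z) (g (t, j)))
    fun t j ↦ hm _).comp (fun _ v ↦ ((v 0, v 1), v 2)) fun _ ↦ by fun_prop

lemma IndepFun.measureReal_setOf_mem_or_mem [IsFiniteMeasure P] {α β : Type*}
    [MeasurableSpace α] [MeasurableSpace β] {V : Ω → α} {e : Ω → β} (h : IndepFun V e P)
    (hV : Measurable V) (he : Measurable e) {A : Set α} {B : Set β} (hA : MeasurableSet A)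
    (hB : MeasurableSet B) :
    P.real {ω | e ω ∈ B ∨ V ω ∈ A} = P.real (e ⁻¹' B) + P.real (V ⁻¹' A) * P.real (e ⁻¹' Bᶜ) := by
  have hsplit : {ω | e ω ∈ B ∨ V ω ∈ A} = e ⁻¹' B ∪ (V ⁻¹' A ∩ e ⁻¹' Bᶜ) := by
    ext ω
    simp only [Set.mem_ofPred_eq, Set.mem_union, Set.mem_inter_iff, Set.mem_preimage,
      Set.mem_compl_iff]
    tauto
  have hdisj : Disjoint (e ⁻¹' B) (V ⁻¹' A ∩ e ⁻¹' Bᶜ) :=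
    Set.disjoint_left.2 fun _ hB hAB ↦ hAB.2 hB
  rw [hsplit, measureReal_union hdisj ((hV hA).inter (he hB.compl)), measureReal_def P (_ ∩ _),
    h.measure_inter_preimage_eq_mul _ _ hA hB.compl, ENNReal.toReal_mul]
  rfl

end ProbabilityTheory

namespace MeasureTheory.Measure

variable (μ : Measure ℝ) [IsProbabilityMeasure μ] [NullSingletonClass μ]

lemma prod_self_diagonal : (μ.prod μ) (Set.diagonal ℝ) = 0 := by
  rw [prod_apply measurableSet_diagonal]
  have (x : ℝ) : Prod.mk x ⁻¹' Set.diagonal ℝ = {x} := by ext; simp [eq_comm]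
  simp [this]

lemma prod_self_real_setOf_lt : (μ.prod μ).real {p | p.1 < p.2} = 1 / 2 := by
  have hlt : MeasurableSet {p : ℝ × ℝ | p.1 < p.2} :=
    measurableSet_lt measurable_fst measurable_snd
  have hswap : (μ.prod μ).real {p | p.2 < p.1} = (μ.prod μ).real {p | p.1 < p.2} := by
    conv_rhs => rw [← prod_swap, map_measureReal_apply measurable_swap hlt]
    rfl
  have hle : (μ.prod μ).real {p | p.2 ≤ p.1} = (μ.prod μ).real {p | p.2 < p.1} := by
    have hsplit : {p : ℝ × ℝ | p.2 ≤ p.1} = {p | p.2 < p.1} ∪ Set.diagonal ℝ := by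
      ext p
      simp [le_iff_lt_or_eq, eq_comm]
    have hdisj : Disjoint {p : ℝ × ℝ | p.2 < p.1} (Set.diagonal ℝ) :=
      Set.disjoint_left.2 fun p hlt heq ↦ hlt.ne' heq
    rw [hsplit, measureReal_union hdisj measurableSet_diagonal,
      measureReal_def _ (Set.diagonal ℝ), prod_self_diagonal, ENNReal.toReal_zero, add_zero]
  have hcompl : {p : ℝ × ℝ | p.1 < p.2}ᶜ = {p | p.2 ≤ p.1} := by ext; simp
  have := probReal_compl_eq_one_sub (μ := μ.prod μ) hlt
  rw [hcompl, hle, hswap] at this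
  linarith

lemma prod_self_real_setOf_le : (μ.prod μ).real {p | p.2 ≤ p.1} = 1 / 2 := by
  have hcompl : {p : ℝ × ℝ | p.2 ≤ p.1} = {p | p.1 < p.2}ᶜ := by ext; simp
  rw [hcompl, probReal_compl_eq_one_sub (measurableSet_lt measurable_fst measurable_snd),
    prod_self_real_setOf_lt]
  norm_num

end MeasureTheory.Measure

def comparisonSet (T t : ℕ) : Set (ℝ × ℝ) :=
  if t < T then {p | p.1 < p.2} else {p | p.2 ≤ p.1}

def keptSet (t : ℕ) : Set ℝ := {r | t ≠ 0 ∧ r = 1}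

def stepSet (T t : ℕ) : Set ((ℝ × ℝ) × ℝ) :=
  {q | q.2 ∈ keptSet t ∨ q.1 ∈ comparisonSet T t}

lemma measurableSet_keptSet (t : ℕ) : MeasurableSet (keptSet t) :=
  (MeasurableSet.const _).inter (measurableSet_singleton 1)

lemma measurableSet_comparisonSet (T t : ℕ) : MeasurableSet (comparisonSet T t) := by
  unfold comparisonSet
  split_ifs
  exacts [measurableSet_lt measurable_fst measurable_snd,
    measurableSet_le measurable_snd measurable_fst]

lemma measurableSet_stepSet (T t : ℕ) : MeasurableSet (stepSet T t) :=
  (measurable_snd (measurableSet_keptSet t)).union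
    (measurable_fst (measurableSet_comparisonSet T t))

lemma mem_stepSet_of_quiescent {x y e z : ℕ → ℝ} (hz0 : z 0 = y 0)
    (hzs : ∀ t, z (t + 1) = if e (t + 1) = 1 then z t else y (t + 1)) {T : ℕ}
    (hstable : ∀ t < T, x t < z t) (hfire : z T ≤ x T) {t : ℕ} (ht : t ≤ T) :
    ((x t, y t), e t) ∈ stepSet T t := by
  by_cases hkeep : t ≠ 0 ∧ e t = 1
  · exact Or.inl hkeep
  right
  have hzy : z t = y t := by
    rcases t with _ | t
    · exact hz0
    · rw [hzs, if_neg (by simpa using hkeep)]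
  unfold comparisonSet
  split_ifs with htT
  · exact hzy ▸ hstable t htT
  · obtain rfl : t = T := by omega
    exact hzy ▸ hfire

lemma ProbabilityTheory.IndepFun.measureReal_preimage_stepSet {Ω : Type*}
    {mΩ : MeasurableSpace Ω} {P : Measure Ω} [IsProbabilityMeasure P]
    (μ : Measure ℝ) [IsProbabilityMeasure μ] [NullSingletonClass μ] {V : Ω → ℝ × ℝ} {e : Ω → ℝ}
    (h : IndepFun V e P) (hV : Measurable V) (he : Measurable e) (hlaw : P.map V = μ.prod μ)
    (T t : ℕ) :
    P.real ((fun ω ↦ (V ω, e ω)) ⁻¹' stepSet T t)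
      = (1 + P.real (e ⁻¹' keptSet t)) / 2 := by
  have hC : P.real (V ⁻¹' comparisonSet T t) = 1 / 2 := by
    rw [← map_measureReal_apply hV (measurableSet_comparisonSet T t), hlaw]
    unfold comparisonSet
    split_ifs
    exacts [μ.prod_self_real_setOf_lt, μ.prod_self_real_setOf_le]
  have hB := measurableSet_keptSet t
  rw [show (fun ω ↦ (V ω, e ω)) ⁻¹' stepSet T t
      = {ω | e ω ∈ keptSet t ∨ V ω ∈ comparisonSet T t} from rfl,
    h.measureReal_setOf_mem_or_mem hV he (measurableSet_comparisonSet T t) hB, hC,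
    Set.preimage_compl, probReal_compl_eq_one_sub (he hB)]
  ring

lemma measureReal_preimage_keptSet {Ω : Type*} {mΩ : MeasurableSpace Ω} {P : Measure Ω}
    {e : Ω → ℝ} (he : Measurable e) {η : ℝ} (hη : 0 ≤ η)
    (hlaw : P.map e = ENNReal.ofReal η • Measure.dirac 1 + ENNReal.ofReal (1 - η) • Measure.dirac 0)
    (t : ℕ) : P.real (e ⁻¹' keptSet t) = if t = 0 then 0 else η := by
  split_ifs with ht
  · simp [keptSet, ht]
  · have hone : keptSet t = {1} := by ext; simp [keptSet, ht]
    rw [hone, ← map_measureReal_apply he (measurableSet_singleton 1), hlaw]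
    simp [Measure.real, hη]

/-- Threshold-of-instability model with uniform state and threshold distributions on
`[0,1]` and memory parameter `0 ≤ η < 1`: with `X_t` i.i.d. uniform, candidate
thresholds `Y_t` i.i.d. uniform, Bernoulli(η) variables `ε_t` (`{0,1}`-valued), all
mutually independent, and `Z₀ = Y₀`, `Z_{t+1} = Z_t` if `ε_{t+1} = 1`,
`Z_{t+1} = Y_{t+1}` otherwise, the quiescent-time distribution satisfies
`P_η(T) ≤ (1/2)·((1+η)/2)^T` for all natural numbers `T`. -/
theorem stmt_11 {Ω : Type*} [MeasurableSpace Ω] (P : Measure Ω) [IsProbabilityMeasure P]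
    (η : ℝ) (hη : η ∈ Set.Ico (0:ℝ) 1)
    (X Y ε : ℕ → Ω → ℝ)
    (hX : ∀ t, Measurable (X t)) (hY : ∀ t, Measurable (Y t)) (hε : ∀ t, Measurable (ε t))
    (hXlaw : ∀ t, P.map (X t) = volume.restrict (Set.Icc (0:ℝ) 1))
    (hYlaw : ∀ t, P.map (Y t) = volume.restrict (Set.Icc (0:ℝ) 1))
    (hεlaw : ∀ t, P.map (ε t)
      = ENNReal.ofReal η • Measure.dirac (1:ℝ) + ENNReal.ofReal (1 - η) • Measure.dirac (0:ℝ))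
    (hindep : iIndepFun (Sum.elim X (Sum.elim Y ε)) P)
    (Z : ℕ → Ω → ℝ)
    (hZ0 : Z 0 = Y 0)
    (hZs : ∀ t ω, Z (t + 1) ω = if ε (t + 1) ω = 1 then Z t ω else Y (t + 1) ω)
    (T : ℕ) :
    (P {ω | (∀ t < T, X t ω < Z t ω) ∧ Z T ω ≤ X T ω}).toReal
      ≤ (1 / 2) * ((1 + η) / 2) ^ T := by
  have hm : ∀ i, Measurable (Sum.elim X (Sum.elim Y ε) i) :=
    Sum.forall.2 ⟨hX, Sum.forall.2 ⟨hY, hε⟩⟩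
  have : IsProbabilityMeasure (volume.restrict (Set.Icc (0:ℝ) 1)) := ⟨by simp⟩
  have hstep (t : ℕ) : P.real ((fun ω ↦ ((X t ω, Y t ω), ε t ω)) ⁻¹' stepSet T t)
      = if t = 0 then 1 / 2 else (1 + η) / 2 := by
    have hXY : IndepFun (X t) (Y t) P :=
      hindep.indepFun (i := .inl t) (j := .inr (.inl t)) (by simp)
    have hXYε : IndepFun (fun ω ↦ (X t ω, Y t ω)) (ε t) P :=
      hindep.indepFun_prodMk hm (.inl t) (.inr (.inl t)) (.inr (.inr t)) (by simp) (by simp)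
    rw [hXYε.measureReal_preimage_stepSet (volume.restrict (Set.Icc (0:ℝ) 1))
      ((hX t).prodMk (hY t)) (hε t), measureReal_preimage_keptSet (hε t) hη.1 (hεlaw t)]
    · split_ifs <;> ring
    · rw [hXY.map_prod_eq_prod_map_map (hX t).aemeasurable (hY t).aemeasurable, hXlaw, hYlaw]
  calc P.real {ω | (∀ t < T, X t ω < Z t ω) ∧ Z T ω ≤ X T ω}
      ≤ P.real (⋂ t ∈ Finset.range (T + 1), (fun ω ↦ ((X t ω, Y t ω), ε t ω)) ⁻¹' stepSet T t) :=
        measureReal_mono fun ω ⟨hstable, hfire⟩ ↦ Set.mem_iInter₂.2 fun t ht ↦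
          mem_stepSet_of_quiescent (x := (X · ω)) (y := (Y · ω)) (e := (ε · ω))
            (congrFun hZ0 ω) (fun t ↦ hZs t ω) hstable hfire
            (Nat.lt_succ_iff.1 (Finset.mem_range.1 ht))
    _ = ∏ t ∈ Finset.range (T + 1), if t = 0 then 1 / 2 else (1 + η) / 2 := by
        rw [measureReal_def, (hindep.prodMk_of_sumElim hX hY hε).measure_inter_preimage_eq_mul
          _ fun t _ ↦ measurableSet_stepSet T t, ENNReal.toReal_prod]
        exact Finset.prod_congr rfl fun t _ ↦ hstep t
    _ = 1 / 2 * ((1 + η) / 2) ^ T := by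
        rw [Finset.prod_range_succ']
        simp [mul_comm, div_pow]
end
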